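/- arXiv:1211.0978 — 2 statements merged into one kernel-verified Lean document; each statement's English description precedes it below -/
import Mathlib

section
/- Let G = (V,E) be a graph, let C be a vertex cover of G with no restriction on isolated vertices, and let G' be the subdivision-plus-gadget graph from the reduction. Then D' = C ∪ {v₁ : v ∈ V} ∪ {v₂ : v ∈ V} is a total dominating set of G' of size |C| + 2|V|. -/
/-- Gadget indices: 0 ↦ v₁, 1 ↦ v₂, 2 ↦ v₃, 3 ↦ v₄. -/
abbrev RedV (V : Type*) (G : SimpleGraph V) := V ⊕ G.edgeSet ⊕ (V × Fin 4)

/-- The subdivision-plus-gadget graph G' of the NP-hardness reduction: each edge {u,w}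
of G is replaced by a path u – e_{uw} – w, and each vertex v of G receives a pendant
path v – v₁ – v₂ – v₄ together with an extra leaf v₃ attached to v₁. -/
def redGraph {V : Type*} (G : SimpleGraph V) : SimpleGraph (RedV V G) :=
  SimpleGraph.fromRel (fun a b =>
    match a, b with
    | Sum.inl u, Sum.inr (Sum.inl e) => u ∈ e.1
    | Sum.inl u, Sum.inr (Sum.inr (w, i)) => u = w ∧ i = 0
    | Sum.inr (Sum.inr (w, i)), Sum.inr (Sum.inr (w', j)) =>
        w = w' ∧ ((i = 0 ∧ j = 1) ∨ (i = 0 ∧ j = 2) ∨ (i = 1 ∧ j = 3))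
    | _, _ => False)

/-!
Every vertex of `G'` has a neighbour in `D' = C ∪ {v₁} ∪ {v₂}`: a vertex `v` of `G` is dominated
by `v₁`, the vertices `v₂, v₃` by `v₁`, the vertices `v₁, v₄` by `v₂`, and a subdivision vertex
`e_{uw}` by whichever of `u, w` lies in the vertex cover `C`. The three parts of `D'` are
disjoint copies of `C`, `V` and `V`, which gives its size.
-/

namespace SimpleGraph

def IsTotalDominatingSet {W : Type*} (H : SimpleGraph W) (D : Set W) : Prop :=
  ∀ x, ∃ d ∈ D, H.Adj x d

variable {V : Type*} {G : SimpleGraph V}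

theorem IsVertexCover.exists_mem_of_mem_edgeSet {C : Set V} (hC : G.IsVertexCover C)
    {e : Sym2 V} (he : e ∈ G.edgeSet) : ∃ u ∈ C, u ∈ e := by
  induction e using Sym2.ind with
  | _ u w =>
    rcases hC he with hu | hw
    · exact ⟨u, hu, Sym2.mem_mk_left u w⟩
    · exact ⟨w, hw, Sym2.mem_mk_right u w⟩

end SimpleGraph

open SimpleGraph

section Reduction

variable {V : Type*} (G : SimpleGraph V)

def gadgetLayer (i : Fin 4) : Set (RedV V G) :=
  {y | ∃ v : V, y = Sum.inr (Sum.inr (v, i))}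

def tdsOfVertexCover (C : Set V) : Set (RedV V G) :=
  Sum.inl '' C ∪ gadgetLayer G 0 ∪ gadgetLayer G 1

variable {G}

theorem redGraph_adj_inl_gadget (v : V) :
    (redGraph G).Adj (Sum.inl v) (Sum.inr (Sum.inr (v, 0))) :=
  ⟨by simp, Or.inl ⟨rfl, rfl⟩⟩

theorem redGraph_adj_edge_inl {e : G.edgeSet} {u : V} (hu : u ∈ (e : Sym2 V)) :
    (redGraph G).Adj (Sum.inr (Sum.inl e)) (Sum.inl u) :=
  ⟨by simp, Or.inr hu⟩

theorem redGraph_adj_gadget_zero_one (v : V) :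
    (redGraph G).Adj (Sum.inr (Sum.inr (v, 0))) (Sum.inr (Sum.inr (v, 1))) :=
  ⟨by simp, Or.inl ⟨rfl, Or.inl ⟨rfl, rfl⟩⟩⟩

theorem redGraph_adj_gadget_zero_two (v : V) :
    (redGraph G).Adj (Sum.inr (Sum.inr (v, 0))) (Sum.inr (Sum.inr (v, 2))) :=
  ⟨by simp, Or.inl ⟨rfl, Or.inr (Or.inl ⟨rfl, rfl⟩)⟩⟩

theorem redGraph_adj_gadget_one_three (v : V) :
    (redGraph G).Adj (Sum.inr (Sum.inr (v, 1))) (Sum.inr (Sum.inr (v, 3))) :=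
  ⟨by simp, Or.inl ⟨rfl, Or.inr (Or.inr ⟨rfl, rfl⟩)⟩⟩

theorem isTotalDominatingSet_tdsOfVertexCover {C : Set V} (hC : G.IsVertexCover C) :
    (redGraph G).IsTotalDominatingSet (tdsOfVertexCover G C) := by
  have mem_zero (v : V) : (Sum.inr (Sum.inr (v, 0)) : RedV V G) ∈ tdsOfVertexCover G C :=
    Or.inl (Or.inr ⟨v, rfl⟩)
  have mem_one (v : V) : (Sum.inr (Sum.inr (v, 1)) : RedV V G) ∈ tdsOfVertexCover G C :=
    Or.inr ⟨v, rfl⟩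
  rintro (v | ⟨e, he⟩ | ⟨v, i⟩)
  · exact ⟨_, mem_zero v, redGraph_adj_inl_gadget v⟩
  · obtain ⟨u, huC, hue⟩ := hC.exists_mem_of_mem_edgeSet he
    exact ⟨Sum.inl u, Or.inl (Or.inl ⟨u, huC, rfl⟩), redGraph_adj_edge_inl hue⟩
  · fin_cases i
    · exact ⟨_, mem_one v, redGraph_adj_gadget_zero_one v⟩
    · exact ⟨_, mem_zero v, (redGraph_adj_gadget_zero_one v).symm⟩
    · exact ⟨_, mem_zero v, (redGraph_adj_gadget_zero_two v).symm⟩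
    · exact ⟨_, mem_one v, (redGraph_adj_gadget_one_three v).symm⟩

theorem gadgetLayer_eq_range (i : Fin 4) :
    gadgetLayer G i = Set.range fun v : V => (Sum.inr (Sum.inr (v, i)) : RedV V G) := by
  ext y
  simp [gadgetLayer, eq_comm]

theorem ncard_gadgetLayer (i : Fin 4) : (gadgetLayer G i).ncard = Nat.card V := by
  rw [gadgetLayer_eq_range]
  exact Set.ncard_range_of_injective fun a b h => by simpa using h

theorem disjoint_gadgetLayer {i j : Fin 4} (hij : i ≠ j) :
    Disjoint (gadgetLayer G i) (gadgetLayer G j) := by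
  rw [Set.disjoint_iff_forall_ne]
  rintro _ ⟨a, rfl⟩ _ ⟨b, rfl⟩ h
  simp_all

theorem disjoint_image_inl_gadgetLayer (C : Set V) (i : Fin 4) :
    Disjoint (Sum.inl '' C) (gadgetLayer G i) := by
  rw [Set.disjoint_iff_forall_ne]
  rintro _ ⟨a, -, rfl⟩ _ ⟨b, rfl⟩
  simp

theorem ncard_tdsOfVertexCover [Finite V] (C : Set V) :
    (tdsOfVertexCover G C).ncard = C.ncard + 2 * Nat.card V := by
  rw [tdsOfVertexCover, Set.union_assoc,
    Set.ncard_union_eq (Set.disjoint_union_right.2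
      ⟨disjoint_image_inl_gadgetLayer C 0, disjoint_image_inl_gadgetLayer C 1⟩),
    Set.ncard_union_eq (disjoint_gadgetLayer (by decide)),
    Set.ncard_image_of_injective C Sum.inl_injective, ncard_gadgetLayer, ncard_gadgetLayer]
  ring

end Reduction

/-- if C is a vertex cover of G, then C ∪ {v₁ : v ∈ V} ∪ {v₂ : v ∈ V} is a
total dominating set of G' of size |C| + 2|V|. -/
theorem vertexCover_gives_tds {V : Type*} [Fintype V] (G : SimpleGraph V)
    (C : Set V) (hC : ∀ u w : V, G.Adj u w → u ∈ C ∨ w ∈ C) :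
    (∀ x : RedV V G, ∃ d ∈ (Sum.inl '' C ∪
        {y : RedV V G | ∃ v : V, y = Sum.inr (Sum.inr (v, (0 : Fin 4)))} ∪
        {y : RedV V G | ∃ v : V, y = Sum.inr (Sum.inr (v, (1 : Fin 4)))}),
      (redGraph G).Adj x d) ∧
    (Sum.inl '' C ∪
        {y : RedV V G | ∃ v : V, y = Sum.inr (Sum.inr (v, (0 : Fin 4)))} ∪
        {y : RedV V G | ∃ v : V, y = Sum.inr (Sum.inr (v, (1 : Fin 4)))}).ncard
      = C.ncard + 2 * Nat.card V :=
  ⟨isTotalDominatingSet_tdsOfVertexCover fun u w => hC u w, ncard_tdsOfVertexCover C⟩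
end

section
/- Let G be a graph with no isolated vertices and let D be a dominating set of G such that at least 4 vertices of D lie in a set X of vertices with the property that every vertex of X has all its neighbors in N(v) ∪ N(w) ∪ {v,w} for two fixed vertices v,w. Then there is a total dominating set D' of G with |D'| ≤ |D| containing both v and w, obtained by replacing 4 vertices of D ∩ X by v, w, a neighbor s of v, and a neighbor t of w. -/
/-!
A vertex whose only dominators in `D` lie in `Y ⊆ X` is a neighbour of one of them, hence lies in
`N(v) ∪ N(w) ∪ {v, w}`; it is therefore adjacent to `v`, to `w`, or (being `v` or `w` itself) to
`s` or `t`. Since `Y` has four elements and `{v, w, s, t}` at most four, the exchange does not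
increase the cardinality.
-/

namespace SimpleGraph

variable {V : Type*} (G : SimpleGraph V)

def IsTotalDominating (D : Set V) : Prop :=
  ∀ x : V, ∃ d ∈ D, G.Adj x d

variable {G} {v w s t : V}

theorem exists_adj_mem_of_mem_neighborSet_union (hs : G.Adj v s) (ht : G.Adj w t) {x : V}
    (hx : x ∈ G.neighborSet v ∪ G.neighborSet w ∪ {v, w}) :
    ∃ d ∈ ({v, w, s, t} : Set V), G.Adj x d := by
  rcases hx with (hxv | hxw) | rfl | rfl
  · exact ⟨v, by simp, hxv.symm⟩
  · exact ⟨w, by simp, hxw.symm⟩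
  · exact ⟨s, by simp, hs⟩
  · exact ⟨t, by simp, ht⟩

theorem IsTotalDominating.sdiff_union {D Y : Set V} (hD : G.IsTotalDominating D)
    (hY : ∀ u ∈ Y, G.neighborSet u ⊆ G.neighborSet v ∪ G.neighborSet w ∪ {v, w})
    (hs : G.Adj v s) (ht : G.Adj w t) :
    G.IsTotalDominating (D \ Y ∪ {v, w, s, t}) := by
  intro x
  obtain ⟨d, hdD, hxd⟩ := hD x
  by_cases hdY : d ∈ Y
  · obtain ⟨d', hd', hxd'⟩ :=
      exists_adj_mem_of_mem_neighborSet_union hs ht (hY d hdY hxd.symm)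
    exact ⟨d', Or.inr hd', hxd'⟩
  · exact ⟨d, Or.inl ⟨hdD, hdY⟩, hxd⟩

end SimpleGraph

namespace Set

variable {α : Type*}

theorem ncard_sdiff_union_le {D Y Z : Set α} (hY : Y.Finite) (hYD : Y ⊆ D)
    (hZY : Z.ncard ≤ Y.ncard) : (D \ Y ∪ Z).ncard ≤ D.ncard := by
  by_cases hD : D.Finite
  · have hsplit : (D \ Y).ncard + Y.ncard = D.ncard := ncard_sdiff_add_ncard_of_subset hYD hD
    have := ncard_union_le (D \ Y) Z
    omega
  · rw [((Set.Infinite.sdiff hD hY).mono subset_union_left).ncard]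
    exact Nat.zero_le _

theorem ncard_insert_four_le (a b c d : α) : ({a, b, c, d} : Set α).ncard ≤ 4 := by
  classical
  simpa [← Finset.coe_insert, ← Finset.coe_pair, ncard_coe_finset] using
    Finset.card_le_four (a := a) (b := b) (c := c) (d := d)

end Set

open SimpleGraph in
theorem exchange_four_confined_vertices_general {V : Type*} (G : SimpleGraph V)
    (v w : V)
    (X : Set V)
    (hXconf : ∀ u ∈ X, G.neighborSet u ⊆ G.neighborSet v ∪ G.neighborSet w ∪ {v, w})
    (s t : V) (hs : G.Adj v s) (ht : G.Adj w t)
    (D : Set V)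
    (hD : ∀ x : V, ∃ d ∈ D, G.Adj x d)
    (h4 : 4 ≤ (D ∩ X).ncard) :
    ∃ Y ⊆ D ∩ X, Y.ncard = 4 ∧
      (∀ x : V, ∃ d ∈ (D \ Y) ∪ {v, w, s, t}, G.Adj x d) ∧
      ((D \ Y) ∪ {v, w, s, t}).ncard ≤ D.ncard ∧
      v ∈ (D \ Y) ∪ {v, w, s, t} ∧ w ∈ (D \ Y) ∪ {v, w, s, t} := by
  obtain ⟨Y, hYDX, hYcard⟩ := Set.exists_subset_card_eq h4
  have hYfin : Y.Finite := Set.finite_of_ncard_pos (by omega)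
  refine ⟨Y, hYDX, hYcard, ?_, ?_, by simp, by simp⟩
  · exact IsTotalDominating.sdiff_union hD
      (fun u hu ↦ hXconf u (hYDX hu).2) hs ht
  · exact Set.ncard_sdiff_union_le hYfin (fun _ hu ↦ (hYDX hu).1)
      (hYcard ▸ Set.ncard_insert_four_le v w s t)

/-- if a total dominating set D contains at least 4 vertices of a set X
whose members have all their neighbors in N(v) ∪ N(w) ∪ {v,w}, then replacing 4 vertices
of D ∩ X by v, w, a neighbor s of v and a neighbor t of w yields a total dominating set
D' with |D'| ≤ |D| containing v and w. -/
theorem exchange_four_confined_vertices {V : Type*} (G : SimpleGraph V)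
    (hiso : ∀ x : V, ∃ y : V, G.Adj x y)
    (v w : V) (hvw : v ≠ w)
    (X : Set V) (hX : X ⊆ G.neighborSet v ∪ G.neighborSet w)
    (hXconf : ∀ u ∈ X, G.neighborSet u ⊆ G.neighborSet v ∪ G.neighborSet w ∪ {v, w})
    (s t : V) (hs : G.Adj v s) (ht : G.Adj w t)
    (D : Set V) (hDfin : D.Finite)
    (hD : ∀ x : V, ∃ d ∈ D, G.Adj x d)
    (h4 : 4 ≤ (D ∩ X).ncard) :
    ∃ Y ⊆ D ∩ X, Y.ncard = 4 ∧
      (∀ x : V, ∃ d ∈ (D \ Y) ∪ {v, w, s, t}, G.Adj x d) ∧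
      ((D \ Y) ∪ {v, w, s, t}).ncard ≤ D.ncard ∧
      v ∈ (D \ Y) ∪ {v, w, s, t} ∧ w ∈ (D \ Y) ∪ {v, w, s, t} :=
  exchange_four_confined_vertices_general G v w X hXconf s t hs ht D hD h4
end
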